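/- arXiv:math/0508258 — 3 statements merged into one kernel-verified Lean document; each statement's English description precedes it below -/
import Mathlib

section
/- Let p̄ = lcm(p0, p1, p2). There exists a unique group homomorphism δ : L(p) → ℤ with δ(x⃗_i) = p̄/p_i for i = 0,1,2, and it satisfies δ(c⃗) = p̄. -/
/-- The subgroup of relations defining `L(p0,p1,p2)`. -/
def Lrel (p0 p1 p2 : ℕ) : AddSubgroup (ℤ × ℤ × ℤ × ℤ) :=
  AddSubgroup.closure
    {((p0 : ℤ), 0, 0, -1), (0, (p1 : ℤ), 0, -1), (0, 0, (p2 : ℤ), -1)}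

/-- The abelian group `L(p)` generated by `x⃗₀, x⃗₁, x⃗₂, c⃗` with relations
`p₀·x⃗₀ = p₁·x⃗₁ = p₂·x⃗₂ = c⃗`. -/
abbrev Lgrp (p0 p1 p2 : ℕ) := (ℤ × ℤ × ℤ × ℤ) ⧸ Lrel p0 p1 p2

def Lx0 (p0 p1 p2 : ℕ) : Lgrp p0 p1 p2 := QuotientAddGroup.mk (1, 0, 0, 0)
def Lx1 (p0 p1 p2 : ℕ) : Lgrp p0 p1 p2 := QuotientAddGroup.mk (0, 1, 0, 0)
def Lx2 (p0 p1 p2 : ℕ) : Lgrp p0 p1 p2 := QuotientAddGroup.mk (0, 0, 1, 0)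
def Lc (p0 p1 p2 : ℕ) : Lgrp p0 p1 p2 := QuotientAddGroup.mk (0, 0, 0, 1)

/-- The linear map on the free group. -/
def auxHom (A B C D : ℤ) : (ℤ × ℤ × ℤ × ℤ) →+ ℤ where
  toFun v := v.1 * A + v.2.1 * B + v.2.2.1 * C + v.2.2.2 * D
  map_zero' := by simp
  map_add' v w := by
    simp only [Prod.fst_add, Prod.snd_add]
    ring

theorem degree_hom_exists_unique (p0 p1 p2 : ℕ)
    (h0 : 0 < p0) (h1 : 0 < p1) (h2 : 0 < p2) :
    (∃! δ : Lgrp p0 p1 p2 →+ ℤ,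
        δ (Lx0 p0 p1 p2) = (Nat.lcm (Nat.lcm p0 p1) p2 / p0 : ℕ) ∧
        δ (Lx1 p0 p1 p2) = (Nat.lcm (Nat.lcm p0 p1) p2 / p1 : ℕ) ∧
        δ (Lx2 p0 p1 p2) = (Nat.lcm (Nat.lcm p0 p1) p2 / p2 : ℕ)) ∧
    (∀ δ : Lgrp p0 p1 p2 →+ ℤ,
        δ (Lx0 p0 p1 p2) = (Nat.lcm (Nat.lcm p0 p1) p2 / p0 : ℕ) →
        δ (Lx1 p0 p1 p2) = (Nat.lcm (Nat.lcm p0 p1) p2 / p1 : ℕ) →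
        δ (Lx2 p0 p1 p2) = (Nat.lcm (Nat.lcm p0 p1) p2 / p2 : ℕ) →
        δ (Lc p0 p1 p2) = (Nat.lcm (Nat.lcm p0 p1) p2 : ℕ)) := by
  set L := Nat.lcm (Nat.lcm p0 p1) p2 with hL
  have hd0 : p0 ∣ L := (Nat.dvd_lcm_left p0 p1).trans (Nat.dvd_lcm_left _ _)
  have hd1 : p1 ∣ L := (Nat.dvd_lcm_right p0 p1).trans (Nat.dvd_lcm_left _ _)
  have hd2 : p2 ∣ L := Nat.dvd_lcm_right _ _
  have hm0 : (p0 : ℤ) * (L / p0 : ℕ) = (L : ℕ) := by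
    exact_mod_cast congrArg (Nat.cast : ℕ → ℤ) (Nat.mul_div_cancel' hd0 : p0 * (L / p0) = L)
  have hm1 : (p1 : ℤ) * (L / p1 : ℕ) = (L : ℕ) := by
    exact_mod_cast congrArg (Nat.cast : ℕ → ℤ) (Nat.mul_div_cancel' hd1 : p1 * (L / p1) = L)
  have hm2 : (p2 : ℤ) * (L / p2 : ℕ) = (L : ℕ) := by
    exact_mod_cast congrArg (Nat.cast : ℕ → ℤ) (Nat.mul_div_cancel' hd2 : p2 * (L / p2) = L)
  -- relation: Lc = p0 • Lx0 in the quotient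
  have hrel : ∀ δ : Lgrp p0 p1 p2 →+ ℤ,
      δ (Lx0 p0 p1 p2) = ((L / p0 : ℕ) : ℤ) → δ (Lc p0 p1 p2) = ((L : ℕ) : ℤ) := by
    intro δ hx0
    have hmem : ((p0 : ℤ), 0, 0, -1) ∈ Lrel p0 p1 p2 :=
      AddSubgroup.subset_closure (by simp)
    have : ((p0 : ℤ) • Lx0 p0 p1 p2 - Lc p0 p1 p2 : Lgrp p0 p1 p2) = 0 := by
      rw [Lx0, Lc, ← QuotientAddGroup.mk_zsmul, ← QuotientAddGroup.mk_sub]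
      refine (QuotientAddGroup.eq_zero_iff _).mpr ?_
      simpa using hmem
    have h := sub_eq_zero.mp this
    have := congrArg δ h.symm
    rw [map_zsmul, hx0] at this
    rw [this, smul_eq_mul, hm0]
  -- uniqueness on generators
  have huniq : ∀ δ δ' : Lgrp p0 p1 p2 →+ ℤ,
      δ (Lx0 p0 p1 p2) = δ' (Lx0 p0 p1 p2) →
      δ (Lx1 p0 p1 p2) = δ' (Lx1 p0 p1 p2) →
      δ (Lx2 p0 p1 p2) = δ' (Lx2 p0 p1 p2) →
      δ (Lc p0 p1 p2) = δ' (Lc p0 p1 p2) → δ = δ' := by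
    intro δ δ' e0 e1 e2 ec
    ext v
    obtain ⟨a, b, c, d⟩ := v
    show δ (QuotientAddGroup.mk (a, b, c, d)) = δ' (QuotientAddGroup.mk (a, b, c, d))
    have hv : (QuotientAddGroup.mk (a, b, c, d) : Lgrp p0 p1 p2)
        = a • Lx0 p0 p1 p2 + b • Lx1 p0 p1 p2 + c • Lx2 p0 p1 p2 + d • Lc p0 p1 p2 := by
      rw [Lx0, Lx1, Lx2, Lc, ← QuotientAddGroup.mk_zsmul, ← QuotientAddGroup.mk_zsmul,
        ← QuotientAddGroup.mk_zsmul, ← QuotientAddGroup.mk_zsmul,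
        ← QuotientAddGroup.mk_add, ← QuotientAddGroup.mk_add, ← QuotientAddGroup.mk_add]
      congr 1
      simp [Prod.ext_iff]
    simp only [hv, map_add, map_zsmul, e0, e1, e2, ec]
  -- existence: build the hom
  have hker : Lrel p0 p1 p2 ≤
      (auxHom ((L / p0 : ℕ) : ℤ) ((L / p1 : ℕ) : ℤ) ((L / p2 : ℕ) : ℤ) ((L : ℕ) : ℤ)).ker := by
    rw [Lrel, AddSubgroup.closure_le]
    rintro v hv
    simp only [Set.mem_insert_iff, Set.mem_singleton_iff] at hv
    rcases hv with rfl | rfl | rfl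
    · simp only [SetLike.mem_coe, AddMonoidHom.mem_ker]
      show _ * _ + _ * _ + _ * _ + _ * _ = (0:ℤ)
      linear_combination hm0
    · simp only [SetLike.mem_coe, AddMonoidHom.mem_ker]
      show _ * _ + _ * _ + _ * _ + _ * _ = (0:ℤ)
      linear_combination hm1
    · simp only [SetLike.mem_coe, AddMonoidHom.mem_ker]
      show _ * _ + _ * _ + _ * _ + _ * _ = (0:ℤ)
      linear_combination hm2
  set δ₀ := QuotientAddGroup.lift _ _ hker with hδ₀
  have hb0 : δ₀ (Lx0 p0 p1 p2) = ((L / p0 : ℕ) : ℤ) := by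
    simp [hδ₀, Lx0, auxHom]
  have hb1 : δ₀ (Lx1 p0 p1 p2) = ((L / p1 : ℕ) : ℤ) := by
    simp [hδ₀, Lx1, auxHom]
  have hb2 : δ₀ (Lx2 p0 p1 p2) = ((L / p2 : ℕ) : ℤ) := by
    simp [hδ₀, Lx2, auxHom]
  constructor
  · refine ⟨δ₀, ⟨hb0, hb1, hb2⟩, ?_⟩
    rintro δ ⟨e0, e1, e2⟩
    exact huniq δ δ₀ (e0.trans hb0.symm) (e1.trans hb1.symm) (e2.trans hb2.symm)
      ((hrel δ e0).trans (hrel δ₀ hb0).symm)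
  · intro δ e0 _ _
    exact hrel δ e0
end

section
/- Let k be a field and let p, q ≥ 1 be integers. The kernel of the k-algebra homomorphism φ : k[x,y,z] → k[u,v] defined by φ(x) = u·v, φ(y) = v^{p+q}, φ(z) = u^{p+q} is the principal ideal generated by x^{p+q} - y·z. -/
/-!
Modulo `x ^ n - y * z` every polynomial is congruent to one of `x`-degree `< n`: writing
`a = s + n * m` with `s < n`, we have `x ^ a ≡ x ^ s * (y * z) ^ m` because `x ^ n - y * z`
divides `(x ^ n) ^ m - (y * z) ^ m`. The map `φ` sends the monomial
`x ^ a * y ^ b * z ^ c` to `u ^ (a + n * c) * v ^ (a + n * b)`, and this exponent map is injective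
on `a < n` (read `a` off modulo `n`), so a reduced polynomial in the kernel is zero.
-/

open MvPolynomial

namespace ASingularity

variable {R : Type*} [CommRing R] (n : ℕ)

variable (R) in
noncomputable def param : Fin 3 → MvPolynomial (Fin 2) R :=
  ![X 0 * X 1, X 1 ^ n, X 0 ^ n]

noncomputable def expMap (d : Fin 3 →₀ ℕ) : Fin 2 →₀ ℕ :=
  Finsupp.single 0 (d 0 + n * d 2) + Finsupp.single 1 (d 0 + n * d 1)

@[simp]
lemma expMap_apply_zero (d : Fin 3 →₀ ℕ) : expMap n d 0 = d 0 + n * d 2 := by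
  simp [expMap]

@[simp]
lemma expMap_apply_one (d : Fin 3 →₀ ℕ) : expMap n d 1 = d 0 + n * d 1 := by
  simp [expMap]

lemma expMap_injOn : Set.InjOn (expMap n) {d | d 0 < n} := by
  intro d hd d' hd' h
  have h0 : d 0 + n * d 2 = d' 0 + n * d' 2 := by simpa using DFunLike.congr_fun h 0
  have h1 : d 0 + n * d 1 = d' 0 + n * d' 1 := by simpa using DFunLike.congr_fun h 1
  have e0 : d 0 = d' 0 := by
    simpa [Nat.add_mul_mod_self_left, Nat.mod_eq_of_lt hd, Nat.mod_eq_of_lt hd'] using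
      congrArg (· % n) h0
  have hn : 0 < n := (Nat.zero_le _).trans_lt hd
  ext i
  fin_cases i
  · exact e0
  · exact Nat.eq_of_mul_eq_mul_left hn (by simpa [e0] using h1)
  · exact Nat.eq_of_mul_eq_mul_left hn (by simpa [e0] using h0)

lemma monomial_fin_two (d : Fin 2 →₀ ℕ) (c : R) :
    monomial d c = C c * X 0 ^ d 0 * X 1 ^ d 1 := by
  rw [monomial_eq, Finsupp.prod_fintype _ _ fun _ => pow_zero _, Fin.prod_univ_two, mul_assoc]

lemma monomial_fin_three (d : Fin 3 →₀ ℕ) (c : R) :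
    monomial d c = C c * X 0 ^ d 0 * X 1 ^ d 1 * X 2 ^ d 2 := by
  rw [monomial_eq, Finsupp.prod_fintype _ _ fun _ => pow_zero _, Fin.prod_univ_three]
  ring

lemma aeval_param_monomial (d : Fin 3 →₀ ℕ) (c : R) :
    aeval (param R n) (monomial d c) = monomial (expMap n d) c := by
  simp only [monomial_fin_two, monomial_fin_three, map_mul, map_pow, aeval_C, aeval_X, param,
    algebraMap_eq, expMap_apply_zero, expMap_apply_one, Matrix.cons_val_zero, Matrix.cons_val_one,
    Matrix.cons_val]
  ring

variable {n}

lemma coeff_expMap_aeval_param {r : MvPolynomial (Fin 3) R} (hr : ∀ e ∈ r.support, e 0 < n)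
    {d : Fin 3 →₀ ℕ} (hd : d 0 < n) :
    coeff (expMap n d) (aeval (param R n) r) = coeff d r := by
  conv_lhs => rw [r.as_sum]
  simp only [map_sum, aeval_param_monomial, coeff_sum, coeff_monomial]
  refine (Finset.sum_eq_single d (fun e he hne => if_neg fun h => hne ?_) (by simp)).trans
    (if_pos rfl)
  exact expMap_injOn n (hr e he) hd h

lemma eq_zero_of_aeval_param_eq_zero {r : MvPolynomial (Fin 3) R}
    (hr : ∀ e ∈ r.support, e 0 < n) (h : aeval (param R n) r = 0) : r = 0 := by
  ext d
  by_cases hd : d ∈ r.support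
  · rw [← coeff_expMap_aeval_param hr (hr d hd), h, coeff_zero, coeff_zero]
  · simpa using hd

lemma exists_monomial_sub_mem_span (hn : n ≠ 0) (d : Fin 3 →₀ ℕ) (c : R) :
    ∃ e : Fin 3 →₀ ℕ, e 0 < n ∧
      monomial d c - monomial e c ∈
        Ideal.span {(X 0 : MvPolynomial (Fin 3) R) ^ n - X 1 * X 2} := by
  set s := d 0 % n
  set m := d 0 / n
  set e : Fin 3 →₀ ℕ :=
    Finsupp.single 0 s + Finsupp.single 1 (d 1 + m) + Finsupp.single 2 (d 2 + m)
  have he : e 0 = s ∧ e 1 = d 1 + m ∧ e 2 = d 2 + m := by simp [e]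
  have key : monomial d c - monomial e c =
      C c * X 0 ^ s * X 1 ^ d 1 * X 2 ^ d 2 * ((X 0 ^ n) ^ m - (X 1 * X 2) ^ m) := by
    rw [monomial_fin_three, monomial_fin_three, he.1, he.2.1, he.2.2, ← Nat.mod_add_div (d 0) n]
    ring
  refine ⟨e, he.1 ▸ Nat.mod_lt _ (Nat.pos_of_ne_zero hn), ?_⟩
  rw [Ideal.mem_span_singleton, key]
  exact (sub_dvd_pow_sub_pow _ _ m).mul_left _

lemma exists_sub_mem_span (hn : n ≠ 0) (f : MvPolynomial (Fin 3) R) :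
    ∃ r : MvPolynomial (Fin 3) R, (∀ e ∈ r.support, e 0 < n) ∧
      f - r ∈ Ideal.span {(X 0 : MvPolynomial (Fin 3) R) ^ n - X 1 * X 2} := by
  induction f using MvPolynomial.induction_on' with
  | monomial d c =>
    obtain ⟨e, he, hmem⟩ := exists_monomial_sub_mem_span hn d c
    refine ⟨monomial e c, fun e' he' => ?_, hmem⟩
    rwa [Finset.mem_singleton.1 (support_monomial_subset he')]
  | add f g hf hg =>
    obtain ⟨r, hr, hfr⟩ := hf
    obtain ⟨r', hr', hgr'⟩ := hg
    refine ⟨r + r', fun e he => ?_, by simpa [add_sub_add_comm] using add_mem hfr hgr'⟩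
    rcases Finset.mem_union.1 (support_add he) with he | he
    exacts [hr e he, hr' e he]

theorem ker_aeval_param (hn : n ≠ 0) :
    RingHom.ker (aeval (R := R) (param R n)) =
      Ideal.span {(X 0 : MvPolynomial (Fin 3) R) ^ n - X 1 * X 2} := by
  have hgen : aeval (param R n) ((X 0 : MvPolynomial (Fin 3) R) ^ n - X 1 * X 2) = 0 := by
    simp only [param, map_sub, map_pow, map_mul, aeval_X, Matrix.cons_val_zero,
      Matrix.cons_val_one, Matrix.cons_val]
    ring
  have hle : Ideal.span {(X 0 : MvPolynomial (Fin 3) R) ^ n - X 1 * X 2} ≤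
      RingHom.ker (aeval (R := R) (param R n)) :=
    (Ideal.span_singleton_le_iff_mem _).2 hgen
  refine le_antisymm (fun f hf => ?_) hle
  obtain ⟨r, hr, hfr⟩ := exists_sub_mem_span hn f
  have hr0 : aeval (param R n) r = 0 := by
    have hfr' : aeval (param R n) (f - r) = 0 := hle hfr
    rwa [map_sub, show aeval (param R n) f = 0 from hf, zero_sub, neg_eq_zero] at hfr'
  rwa [eq_zero_of_aeval_param_eq_zero hr hr0, sub_zero] at hfr

end ASingularity

theorem Apq_kernel_general (k : Type) [Field k] (p q : ℕ) (hp : 1 ≤ p) :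
    let φ : MvPolynomial (Fin 3) k →ₐ[k] MvPolynomial (Fin 2) k :=
      aeval ![X 0 * X 1, (X 1) ^ (p + q), (X 0) ^ (p + q)]
    RingHom.ker φ.toRingHom =
      Ideal.span {(X 0 : MvPolynomial (Fin 3) k) ^ (p + q) - X 1 * X 2} :=
  ASingularity.ker_aeval_param (by omega)

theorem Apq_kernel (k : Type) [Field k] (p q : ℕ) (hp : 1 ≤ p) (hq : 1 ≤ q) :
    let φ : MvPolynomial (Fin 3) k →ₐ[k] MvPolynomial (Fin 2) k :=
      aeval ![X 0 * X 1, (X 1) ^ (p + q), (X 0) ^ (p + q)]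
    RingHom.ker φ.toRingHom =
      Ideal.span {(X 0 : MvPolynomial (Fin 3) k) ^ (p + q) - X 1 * X 2} :=
  Apq_kernel_general k p q hp
end

section
/- For positive integers p0, p1, p2, the quotient of L(p0,p1,p2) by its torsion subgroup is infinite cyclic, and the composite L(p0,p1,p2) → L(p0,p1,p2)/torsion ≅ ℤ can be normalized so that x⃗_i maps to p̄/p_i, where p̄ = lcm(p0,p1,p2). -/
set_option maxHeartbeats 1000000 in
theorem L_torsionfree_quotient_infinite_cyclic (p0 p1 p2 : ℕ)
    (h0 : 0 < p0) (h1 : 0 < p1) (h2 : 0 < p2) :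
    ∃ δ : Lgrp p0 p1 p2 →+ ℤ,
      δ (Lx0 p0 p1 p2) = (Nat.lcm (Nat.lcm p0 p1) p2 / p0 : ℕ) ∧
      δ (Lx1 p0 p1 p2) = (Nat.lcm (Nat.lcm p0 p1) p2 / p1 : ℕ) ∧
      δ (Lx2 p0 p1 p2) = (Nat.lcm (Nat.lcm p0 p1) p2 / p2 : ℕ) ∧
      Function.Surjective δ ∧
      (∀ g : Lgrp p0 p1 p2, δ g = 0 ↔ ∃ n : ℕ, n ≠ 0 ∧ n • g = 0) := by
  set L : ℕ := Nat.lcm (Nat.lcm p0 p1) p2 with hLdef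
  have hLpos : 0 < L := Nat.lcm_pos (Nat.lcm_pos h0 h1) h2
  have hd0 : p0 ∣ L := (Nat.dvd_lcm_left p0 p1).trans (Nat.dvd_lcm_left _ _)
  have hd1 : p1 ∣ L := (Nat.dvd_lcm_right p0 p1).trans (Nat.dvd_lcm_left _ _)
  have hd2 : p2 ∣ L := Nat.dvd_lcm_right _ _
  have hLP : L ∣ p0 * p1 * p2 :=
    Nat.lcm_dvd (Nat.lcm_dvd ⟨p1 * p2, by ring⟩ ⟨p0 * p2, by ring⟩) ⟨p0 * p1, by ring⟩
  -- key cast identities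
  have hc0 : ((L / p0 : ℕ) : ℤ) * p0 = (L : ℤ) := by exact_mod_cast Nat.div_mul_cancel hd0
  have hc1 : ((L / p1 : ℕ) : ℤ) * p1 = (L : ℤ) := by exact_mod_cast Nat.div_mul_cancel hd1
  have hc2 : ((L / p2 : ℕ) : ℤ) * p2 = (L : ℤ) := by exact_mod_cast Nat.div_mul_cancel hd2
  -- the ambient homomorphism
  set φ : (ℤ × ℤ × ℤ × ℤ) →+ ℤ := AddMonoidHom.mk'
    (fun v => v.1 * (L / p0 : ℕ) + v.2.1 * (L / p1 : ℕ) + v.2.2.1 * (L / p2 : ℕ) + v.2.2.2 * L)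
    (by rintro ⟨a, b, c, d⟩ ⟨a', b', c', d'⟩; simp; ring) with hφdef
  have hφ : ∀ v : ℤ × ℤ × ℤ × ℤ, φ v =
      v.1 * (L / p0 : ℕ) + v.2.1 * (L / p1 : ℕ) + v.2.2.1 * (L / p2 : ℕ) + v.2.2.2 * L := by
    intro v; rfl
  have hker : Lrel p0 p1 p2 ≤ φ.ker := by
    rw [Lrel, AddSubgroup.closure_le]
    rintro v hv
    simp only [Set.mem_insert_iff, Set.mem_singleton_iff] at hv
    rcases hv with rfl | rfl | rfl
    · simp only [SetLike.mem_coe, AddMonoidHom.mem_ker, hφ]; linear_combination hc0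
    · simp only [SetLike.mem_coe, AddMonoidHom.mem_ker, hφ]; linear_combination hc1
    · simp only [SetLike.mem_coe, AddMonoidHom.mem_ker, hφ]; linear_combination hc2
  refine ⟨QuotientAddGroup.lift _ φ hker, ?_, ?_, ?_, ?_, ?_⟩
  · show φ (1, 0, 0, 0) = _; simp [hφ]
  · show φ (0, 1, 0, 0) = _; simp [hφ]
  · show φ (0, 0, 1, 0) = _; simp [hφ]
  · -- surjectivity
    -- first: gcd of the three cofactors is 1
    have hgcd : Nat.gcd (L / p0) (Nat.gcd (L / p1) (L / p2)) = 1 := by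
      set g := Nat.gcd (L / p0) (Nat.gcd (L / p1) (L / p2)) with hg
      have hgL : g ∣ L := (Nat.gcd_dvd_left _ _).trans (Nat.div_dvd_of_dvd hd0)
      have key : ∀ p : ℕ, g ∣ L / p → p ∣ L → p ∣ L / g := by
        intro p hp hpL
        have : p * g ∣ L := (Nat.dvd_div_iff_mul_dvd hpL).mp hp
        exact (Nat.dvd_div_iff_mul_dvd hgL).mpr (by rwa [mul_comm] at this)
      have k0 : p0 ∣ L / g := key p0 (Nat.gcd_dvd_left _ _) hd0
      have k1 : p1 ∣ L / g :=
        key p1 ((Nat.gcd_dvd_right _ _).trans (Nat.gcd_dvd_left _ _)) hd1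
      have k2 : p2 ∣ L / g :=
        key p2 ((Nat.gcd_dvd_right _ _).trans (Nat.gcd_dvd_right _ _)) hd2
      have hLdvd : L ∣ L / g := Nat.lcm_dvd (Nat.lcm_dvd k0 k1) k2
      have heq : L / g = L := Nat.dvd_antisymm (Nat.div_dvd_of_dvd hgL) hLdvd
      have hLLg : L = L * g := by
        conv_lhs => rw [← Nat.div_mul_cancel hgL, heq]
      have hgpos : 0 < g := Nat.pos_of_dvd_of_pos hgL hLpos
      nlinarith
    -- Bezout twice
    have hsurj1 : ∃ a b c : ℤ,
        a * ((L / p0 : ℕ) : ℤ) + b * ((L / p1 : ℕ) : ℤ) + c * ((L / p2 : ℕ) : ℤ) = 1 := by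
      have e1 : (((L / p1 : ℕ) : ℤ).gcd ((L / p2 : ℕ) : ℤ) : ℤ) =
          ((L / p1 : ℕ) : ℤ) * Int.gcdA _ _ + ((L / p2 : ℕ) : ℤ) * Int.gcdB _ _ :=
        Int.gcd_eq_gcd_ab _ _
      have e2 : ((((L / p0 : ℕ) : ℤ).gcd ((Nat.gcd (L / p1) (L / p2) : ℕ) : ℤ)) : ℤ) =
          ((L / p0 : ℕ) : ℤ) * Int.gcdA _ _ + ((Nat.gcd (L / p1) (L / p2) : ℕ) : ℤ) * Int.gcdB _ _ :=
        Int.gcd_eq_gcd_ab _ _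
      have hgnat : ((L / p1 : ℕ) : ℤ).gcd ((L / p2 : ℕ) : ℤ) = Nat.gcd (L / p1) (L / p2) :=
        Int.gcd_natCast_natCast _ _
      have hgnat2 : (((L / p0 : ℕ) : ℤ).gcd ((Nat.gcd (L / p1) (L / p2) : ℕ) : ℤ)) = 1 := by
        rw [Int.gcd_natCast_natCast, hgcd]
      rw [hgnat] at e1
      rw [hgnat2] at e2
      set u : ℤ := Int.gcdA ((L / p1 : ℕ) : ℤ) ((L / p2 : ℕ) : ℤ) with hu
      set v : ℤ := Int.gcdB ((L / p1 : ℕ) : ℤ) ((L / p2 : ℕ) : ℤ) with hv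
      set s : ℤ := Int.gcdA ((L / p0 : ℕ) : ℤ) ((Nat.gcd (L / p1) (L / p2) : ℕ) : ℤ) with hs
      set t : ℤ := Int.gcdB ((L / p0 : ℕ) : ℤ) ((Nat.gcd (L / p1) (L / p2) : ℕ) : ℤ) with ht
      refine ⟨s, u * t, v * t, ?_⟩
      rw [show ((1 : ℕ) : ℤ) = 1 from rfl] at e2
      linear_combination (-1 : ℤ) * e2 - t * e1
    obtain ⟨a, b, c, hone⟩ := hsurj1
    intro k
    refine ⟨QuotientAddGroup.mk (k * a, k * b, k * c, 0), ?_⟩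
    show φ _ = k
    rw [hφ]
    simp only []
    calc k * a * ((L / p0 : ℕ) : ℤ) + k * b * ((L / p1 : ℕ) : ℤ) + k * c * ((L / p2 : ℕ) : ℤ)
          + 0 * (L : ℤ)
        = k * (a * ((L / p0 : ℕ) : ℤ) + b * ((L / p1 : ℕ) : ℤ) + c * ((L / p2 : ℕ) : ℤ)) := by ring
      _ = k := by rw [hone]; ring
  · -- torsion characterization
    intro g
    constructor
    · intro hδ
      induction g using QuotientAddGroup.induction_on with
      | H v =>
        obtain ⟨a, b, c, d⟩ := v
        refine ⟨p0 * p1 * p2, by positivity, ?_⟩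
        rw [← QuotientAddGroup.mk_nsmul, QuotientAddGroup.eq_zero_iff]
        -- the element is an explicit combination of the relators
        have hδ' : a * ((L / p0 : ℕ) : ℤ) + b * ((L / p1 : ℕ) : ℤ) + c * ((L / p2 : ℕ) : ℤ)
            + d * (L : ℤ) = 0 := hδ
        obtain ⟨k, hk⟩ := hLP
        have hkz : (p0 * p1 * p2 : ℤ) = (L : ℤ) * k := by exact_mod_cast hk
        -- multiply hδ' by k
        have hmul : a * (((L / p0 : ℕ) : ℤ) * k) + b * (((L / p1 : ℕ) : ℤ) * k)
            + c * (((L / p2 : ℕ) : ℤ) * k) + d * ((L : ℤ) * k) = 0 := by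
          have := congrArg (· * (k : ℤ)) hδ'
          simpa [add_mul, mul_assoc] using this
        have e0 : ((L / p0 : ℕ) : ℤ) * k * p0 = (p0 * p1 * p2 : ℤ) := by
          rw [hkz, show ((L / p0 : ℕ) : ℤ) * k * p0 = ((L / p0 : ℕ) : ℤ) * p0 * k by ring, hc0]
        have e1 : ((L / p1 : ℕ) : ℤ) * k * p1 = (p0 * p1 * p2 : ℤ) := by
          rw [hkz, show ((L / p1 : ℕ) : ℤ) * k * p1 = ((L / p1 : ℕ) : ℤ) * p1 * k by ring, hc1]
        have e2 : ((L / p2 : ℕ) : ℤ) * k * p2 = (p0 * p1 * p2 : ℤ) := by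
          rw [hkz, show ((L / p2 : ℕ) : ℤ) * k * p2 = ((L / p2 : ℕ) : ℤ) * p2 * k by ring, hc2]
        -- cofactors
        set q0 : ℤ := ((L / p0 : ℕ) : ℤ) * k with hq0
        set q1 : ℤ := ((L / p1 : ℕ) : ℤ) * k with hq1
        set q2 : ℤ := ((L / p2 : ℕ) : ℤ) * k with hq2
        have hmem : (a * q0) • (((p0 : ℤ), 0, 0, -1) : ℤ × ℤ × ℤ × ℤ)
            + (b * q1) • ((0, (p1 : ℤ), 0, -1) : ℤ × ℤ × ℤ × ℤ)
            + (c * q2) • ((0, 0, (p2 : ℤ), -1) : ℤ × ℤ × ℤ × ℤ)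
            = (p0 * p1 * p2 : ℕ) • ((a, b, c, d) : ℤ × ℤ × ℤ × ℤ) := by
          have hn : ((p0 * p1 * p2 : ℕ) : ℤ) = (p0 * p1 * p2 : ℤ) := by push_cast; ring
          ext <;> simp [Prod.smul_def, smul_eq_mul, hn]
          · rw [show a * q0 * p0 = a * (q0 * p0) by ring, e0]; ring
          · rw [show b * q1 * p1 = b * (q1 * p1) by ring, e1]; ring
          · rw [show c * q2 * p2 = c * (q2 * p2) by ring, e2]; ring
          · -- last coordinate
            have : a * q0 + b * q1 + c * q2 + d * ((L:ℤ) * k) = 0 := by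
              simpa [hq0, hq1, hq2, mul_assoc] using hmul
            rw [← hkz] at this
            nlinarith [this]
        rw [← hmem]
        have m0 : (((p0 : ℤ), 0, 0, -1) : ℤ × ℤ × ℤ × ℤ) ∈ Lrel p0 p1 p2 :=
          AddSubgroup.subset_closure (by simp)
        have m1 : ((0, (p1 : ℤ), 0, -1) : ℤ × ℤ × ℤ × ℤ) ∈ Lrel p0 p1 p2 :=
          AddSubgroup.subset_closure (by simp)
        have m2 : ((0, 0, (p2 : ℤ), -1) : ℤ × ℤ × ℤ × ℤ) ∈ Lrel p0 p1 p2 :=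
          AddSubgroup.subset_closure (by simp)
        exact add_mem (add_mem (zsmul_mem m0 _) (zsmul_mem m1 _)) (zsmul_mem m2 _)
    · rintro ⟨n, hn, hng⟩
      have := congrArg (QuotientAddGroup.lift _ φ hker) hng
      rw [map_nsmul, map_zero] at this
      have : (n : ℤ) * (QuotientAddGroup.lift _ φ hker) g = 0 := by
        simpa [nsmul_eq_mul] using this
      rcases mul_eq_zero.mp this with h | h
      · exact absurd (by exact_mod_cast h) hn
      · exact h
end
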